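/- With S₀ = {D_pD_qD^ī(x) − D_qD_pD^ī(x) − Σ_r α_{pq}^r D_rD^ī(x) : p > q in J, D^ī(x) ∈ H, x ∈ X}, where H = {D_{i1}⋯D_{im}(x) : i1 ≤ ⋯ ≤ im, x ∈ X}, one has Irr(S₀) = H*, the free monoid generated by H. -/

import Mathlib

/-- A letter `D^ī(x)` of the free differential algebra: the word `ī` of operator
indices together with the generator `x`. -/
abbrev Letter (J X : Type*) := List J × X

variable {k J X : Type*} [CommRing k]

/-- The monomial of `D(X) = k⟨(D^ω(X))^*⟩` corresponding to a word `u ∈ T`. -/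
noncomputable def monoW (u : List (Letter J X)) : MonoidAlgebra k (FreeMonoid (Letter J X)) :=
  MonoidAlgebra.single (FreeMonoid.ofList u) 1

/-- Action of the derivation `D_j` on a word, defined by the Leibniz rule. -/
noncomputable def derivMon (j : J) : List (Letter J X) → MonoidAlgebra k (FreeMonoid (Letter J X))
  | [] => 0
  | (a, x) :: v =>
      monoW ((j :: a, x) :: v) + monoW [(a, x)] * derivMon j v

/-- The derivation `D_j` on the free differential algebra `D(X)`. -/
noncomputable def Dop (j : J) :
    MonoidAlgebra k (FreeMonoid (Letter J X)) →ₗ[k] MonoidAlgebra k (FreeMonoid (Letter J X)) :=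
  (Finsupp.lsum k fun u =>
    LinearMap.toSpanSingleton k (MonoidAlgebra k (FreeMonoid (Letter J X))) (derivMon j u.toList)) ∘ₗ
      (MonoidAlgebra.coeffLinearEquiv k).toLinearMap

/-- The composite operator `D^j̄ = D_{j₁} ∘ ⋯ ∘ D_{jₙ}`. -/
noncomputable def Dops (jb : List J) :
    MonoidAlgebra k (FreeMonoid (Letter J X)) →ₗ[k] MonoidAlgebra k (FreeMonoid (Letter J X)) :=
  jb.foldr (fun j m => (Dop j).comp m) LinearMap.id

/-- `d^j̄(u)`: prepend the operator word `j̄` to the first letter of `u`. -/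
def dHat (jb : List J) : List (Letter J X) → List (Letter J X)
  | [] => []
  | (a, x) :: v => (jb ++ a, x) :: v

/-- Coefficient of the word `u` in `f ∈ D(X)`. -/
noncomputable def coeffW (f : MonoidAlgebra k (FreeMonoid (Letter J X)))
    (u : List (Letter J X)) : k := f.coeff (FreeMonoid.ofList u)

section Order
variable [LinearOrder J] [LinearOrder X]

/-- The order on letters: compare `wt(D^ī(x)) = (x; m, i₁, …, i_m)` lexicographically. -/
def LetterLt (a b : Letter J X) : Prop :=
  a.2 < b.2 ∨ (a.2 = b.2 ∧ (a.1.length < b.1.length ∨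
    (a.1.length = b.1.length ∧ List.Lex (· < ·) a.1 b.1)))

/-- The deg-lex order on words: first by length, then lexicographically. -/
def DegLexLt (u v : List (Letter J X)) : Prop :=
  u.length < v.length ∨ (u.length = v.length ∧ List.Lex LetterLt u v)

/-- `u` is the leading term of `f`. -/
def IsLT (f : MonoidAlgebra k (FreeMonoid (Letter J X))) (u : List (Letter J X)) : Prop :=
  coeffW f u ≠ 0 ∧ ∀ v, coeffW f v ≠ 0 → v ≠ u → DegLexLt v u

/-- `f` is monic with leading term `u`. -/
def MonicW (f : MonoidAlgebra k (FreeMonoid (Letter J X))) (u : List (Letter J X)) : Prop :=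
  IsLT f u ∧ coeffW f u = 1

end Order

/-- Membership in the `D`-ideal generated by `S`. -/
inductive InDIdeal (S : Set (MonoidAlgebra k (FreeMonoid (Letter J X)))) :
    MonoidAlgebra k (FreeMonoid (Letter J X)) → Prop
  | of : ∀ s ∈ S, InDIdeal S s
  | zero : InDIdeal S 0
  | add : ∀ {a b}, InDIdeal S a → InDIdeal S b → InDIdeal S (a + b)
  | smul : ∀ (c : k) {a}, InDIdeal S a → InDIdeal S (c • a)
  | mul_left : ∀ (g) {a}, InDIdeal S a → InDIdeal S (g * a)
  | mul_right : ∀ (g) {a}, InDIdeal S a → InDIdeal S (a * g)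
  | deriv : ∀ (j : J) {a}, InDIdeal S a → InDIdeal S (Dop j a)

/-- `(S,𝒟)`-words: `a · D^j̄(s) · b` with `s ∈ S`. -/
def IsSDWord (S : Set (MonoidAlgebra k (FreeMonoid (Letter J X))))
    (g : MonoidAlgebra k (FreeMonoid (Letter J X))) : Prop :=
  ∃ (a b : List (Letter J X)) (jb : List J), ∃ s ∈ S, g = monoW a * Dops jb s * monoW b

section Order2
variable [LinearOrder J] [LinearOrder X]

/-- `f ≡ 0 mod (S, w)`: `f` is a linear combination of `(S,𝒟)`-words with leading term `< w`. -/
def TrivMod (S : Set (MonoidAlgebra k (FreeMonoid (Letter J X))))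
    (w : List (Letter J X)) (f : MonoidAlgebra k (FreeMonoid (Letter J X))) : Prop :=
  f ∈ Submodule.span k {g | IsSDWord S g ∧ ∃ l, IsLT g l ∧ DegLexLt l w}

/-- `S` is a Gröbner–Shirshov basis: all compositions of elements of `S` are trivial. -/
def IsGSB (S : Set (MonoidAlgebra k (FreeMonoid (Letter J X)))) : Prop :=
  ∀ f ∈ S, ∀ g ∈ S, ∀ fb gb, MonicW f fb → MonicW g gb →
    (∀ a b jb, gb ≠ [] → fb = a ++ dHat jb gb ++ b →
        TrivMod S fb (f - monoW a * Dops jb g * monoW b)) ∧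
    (∀ ib b, fb ≠ [] → dHat ib fb = gb ++ b →
        TrivMod S (dHat ib fb) (Dops ib f - g * monoW b)) ∧
    (∀ a b jb, a ≠ [] → b ≠ [] → fb ≠ [] → gb ≠ [] →
        fb ++ b = a ++ dHat jb gb → (fb ++ b).length < fb.length + gb.length →
        TrivMod S (fb ++ b) (f * monoW b - monoW a * Dops jb g))

/-- `Irr(S)`: words containing no subword `d^ī(s̄)` with `s ∈ S`. -/
def Irr (S : Set (MonoidAlgebra k (FreeMonoid (Letter J X)))) : Set (List (Letter J X)) :=
  {u | ¬ ∃ (a b : List (Letter J X)) (ib : List J), ∃ s ∈ S, ∃ sb, IsLT s sb ∧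
        u = a ++ dHat ib sb ++ b}

end Order2

/-- The `D`-ideal generated by `S`, as a `k`-submodule of `D(X)`. -/
noncomputable def DIdealSub (S : Set (MonoidAlgebra k (FreeMonoid (Letter J X)))) :
    Submodule k (MonoidAlgebra k (FreeMonoid (Letter J X))) where
  carrier := {f | InDIdeal S f}
  add_mem' := fun h1 h2 => InDIdeal.add h1 h2
  zero_mem' := InDIdeal.zero
  smul_mem' := fun c _ h => InDIdeal.smul c h

/-- The relations defining a Lie-differential algebra from structure constants `α`. -/
noncomputable def SLie (α : J → J → (J →₀ k)) :
    Set (MonoidAlgebra k (FreeMonoid (Letter J X))) :=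
  {h | ∃ (i j : J) (u : List (Letter J X)),
    h = Dop i (Dop j (monoW u)) - Dop j (Dop i (monoW u)) -
        (α i j).sum fun r c => c • Dop r (monoW u)}

/-- The reduced set `S₀` of relations: `p > q` and a single letter with sorted indices. -/
noncomputable def SLie0 [LinearOrder J] (α : J → J → (J →₀ k)) :
    Set (MonoidAlgebra k (FreeMonoid (Letter J X))) :=
  {h | ∃ (p q : J) (ib : List J) (x : X), q < p ∧ List.Pairwise (· ≤ ·) ib ∧
    h = Dop p (Dop q (monoW [(ib, x)])) - Dop q (Dop p (monoW [(ib, x)])) -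
        (α p q).sum fun r c => c • Dop r (monoW [(ib, x)])}

/-- Antisymmetry of the structure constants. -/
def AntiSymm (α : J → J → (J →₀ k)) : Prop := ∀ i j, α i j = - α j i

/-- The Jacobi identity for the structure constants. -/
def Jacobi (α : J → J → (J →₀ k)) : Prop :=
  ∀ i j l t, (α i j).sum (fun s c => c * α s l t) + (α l i).sum (fun s c => c * α s j t) +
    (α j l).sum (fun s c => c * α s i t) = 0

set_option linter.unusedSectionVars false

lemma Dop_single (j : J) (l : List J) (x : X) :
    Dop j (monoW [(l, x)] : MonoidAlgebra k (FreeMonoid (Letter J X))) = monoW [(j :: l, x)] := by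
  simp [Dop, monoW, Finsupp.lsum_apply, derivMon, MonoidAlgebra.coeff_single]

lemma sform (α : J → J → (J →₀ k)) (p q : J) (ib : List J) (x : X) :
    (Dop p (Dop q (monoW [(ib, x)])) - Dop q (Dop p (monoW [(ib, x)])) -
        (α p q).sum fun r c => c • Dop r (monoW [(ib, x)]) : MonoidAlgebra k (FreeMonoid (Letter J X)))
    = monoW [(p :: q :: ib, x)] - monoW [(q :: p :: ib, x)] -
        (α p q).sum fun r c => c • monoW [(r :: ib, x)] := by
  simp [Dop_single]

lemma coeff_monoW_self (w : List (Letter J X)) :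
    coeffW (monoW w : MonoidAlgebra k (FreeMonoid (Letter J X))) w = 1 := by
  simp [coeffW, monoW, MonoidAlgebra.coeff_single, Finsupp.single_apply]

lemma coeff_monoW_ne {w v : List (Letter J X)} (h : w ≠ v) :
    coeffW (monoW w : MonoidAlgebra k (FreeMonoid (Letter J X))) v = 0 := by
  have : FreeMonoid.ofList w ≠ FreeMonoid.ofList v := fun hh => h (by simpa using hh)
  simp [coeffW, monoW, MonoidAlgebra.coeff_single, Finsupp.single_apply, this]

lemma coeff_sum (g : J →₀ k) (F : J → List (Letter J X)) (v : List (Letter J X)) :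
    coeffW (g.sum fun r c => c • (monoW (F r) : MonoidAlgebra k (FreeMonoid (Letter J X)))) v
      = g.sum fun r c => c * coeffW (monoW (F r)) v := by
  classical
  simp only [coeffW, Finsupp.sum]
  rw [MonoidAlgebra.coeff_sum, Finsupp.finset_sum_apply]
  exact Finset.sum_congr rfl fun r _ => MonoidAlgebra.coeff_smul_apply _ _ _

lemma coeff_sub (f g : MonoidAlgebra k (FreeMonoid (Letter J X))) (v : List (Letter J X)) :
    coeffW (f - g) v = coeffW f v - coeffW g v := Finsupp.sub_apply _ _ _

section Main
variable [LinearOrder J] [LinearOrder X]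

lemma w2_ne_w1 {p q : J} (hpq : q < p) (ib : List J) (x : X) :
    ([(q :: p :: ib, x)] : List (Letter J X)) ≠ [(p :: q :: ib, x)] := by
  intro h
  injection h with h1 _
  injection h1 with h2 _
  injection h2 with h3 _
  exact hpq.ne h3

lemma wr_ne_w1 (r p q : J) (ib : List J) (x : X) :
    ([(r :: ib, x)] : List (Letter J X)) ≠ [(p :: q :: ib, x)] := by
  intro h
  injection h with h1 _
  injection h1 with h2 _
  have := congrArg List.length h2
  simp at this

lemma coeff_s_w1 (p q : J) (hpq : q < p) (ib : List J) (x : X) (g : J →₀ k) :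
    coeffW (monoW [(p::q::ib,x)] - monoW [(q::p::ib,x)] -
      g.sum (fun r c => c • monoW [(r::ib,x)]) : MonoidAlgebra k (FreeMonoid (Letter J X)))
      [(p::q::ib,x)] = 1 := by
  rw [coeff_sub, coeff_sub, coeff_monoW_self, coeff_monoW_ne (w2_ne_w1 hpq ib x), coeff_sum,
    Finsupp.sum, Finset.sum_eq_zero (fun r _ => by rw [coeff_monoW_ne (wr_ne_w1 r p q ib x), mul_zero])]
  ring

lemma coeff_s_support {p q : J} {ib : List J} {x : X} {g : J →₀ k} {v : List (Letter J X)}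
    (h : coeffW (monoW [(p::q::ib,x)] - monoW [(q::p::ib,x)] -
      g.sum (fun r c => c • monoW [(r::ib,x)]) : MonoidAlgebra k (FreeMonoid (Letter J X))) v ≠ 0) :
    v = [(p::q::ib,x)] ∨ v = [(q::p::ib,x)] ∨ ∃ r, v = [(r::ib,x)] := by
  by_contra hc
  push_neg at hc
  obtain ⟨h1, h2, h3⟩ := hc
  apply h
  rw [coeff_sub, coeff_sub, coeff_monoW_ne (Ne.symm h1), coeff_monoW_ne (Ne.symm h2), coeff_sum,
    Finsupp.sum, Finset.sum_eq_zero (fun r _ => by rw [coeff_monoW_ne (Ne.symm (h3 r)), mul_zero])]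
  ring

lemma lt_w1_w2 {p q : J} (hpq : q < p) (ib : List J) (x : X) :
    DegLexLt ([(q::p::ib,x)] : List (Letter J X)) [(p::q::ib,x)] :=
  Or.inr ⟨rfl, List.Lex.rel (Or.inr ⟨rfl, Or.inr ⟨rfl, List.Lex.rel hpq⟩⟩)⟩

lemma lt_w1_wr (r p q : J) (ib : List J) (x : X) :
    DegLexLt ([(r::ib,x)] : List (Letter J X)) [(p::q::ib,x)] :=
  Or.inr ⟨rfl, List.Lex.rel (Or.inr ⟨rfl, Or.inl (by simp)⟩)⟩

lemma not_lt_w2_w1 {p q : J} (hpq : q < p) (ib : List J) (x : X) :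
    ¬ DegLexLt ([(p::q::ib,x)] : List (Letter J X)) [(q::p::ib,x)] := by
  rintro (h | ⟨-, h⟩)
  · simp at h
  · cases h with
    | rel h =>
      rcases h with h | ⟨-, h | ⟨-, h⟩⟩
      · exact lt_irrefl _ h
      · exact lt_irrefl _ h
      · cases h with
        | rel h' => exact lt_asymm hpq h'
        | cons h' => exact lt_irrefl _ hpq
    | cons h => cases h

lemma not_lt_wr_w1 (r p q : J) (ib : List J) (x : X) :
    ¬ DegLexLt ([(p::q::ib,x)] : List (Letter J X)) [(r::ib,x)] := by
  rintro (h | ⟨-, h⟩)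
  · simp at h
  · cases h with
    | rel h =>
      rcases h with h | ⟨-, h | ⟨h, -⟩⟩
      · exact lt_irrefl _ h
      · simp at h
      · simp at h

lemma isLT_s [Nontrivial k] (p q : J) (hpq : q < p) (ib : List J) (x : X) (g : J →₀ k) :
    IsLT (monoW [(p::q::ib,x)] - monoW [(q::p::ib,x)] -
      g.sum (fun r c => c • monoW [(r::ib,x)]) : MonoidAlgebra k (FreeMonoid (Letter J X)))
      [(p::q::ib,x)] := by
  constructor
  · rw [coeff_s_w1 p q hpq ib x g]; exact one_ne_zero
  · intro v hv hne
    rcases coeff_s_support hv with h | h | ⟨r, h⟩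
    · exact absurd h hne
    · exact h ▸ lt_w1_w2 hpq ib x
    · exact h ▸ lt_w1_wr r p q ib x

lemma isLT_s_unique [Nontrivial k] {p q : J} (hpq : q < p) {ib : List J} {x : X} {g : J →₀ k}
    {sb : List (Letter J X)}
    (h : IsLT (monoW [(p::q::ib,x)] - monoW [(q::p::ib,x)] -
      g.sum (fun r c => c • monoW [(r::ib,x)]) : MonoidAlgebra k (FreeMonoid (Letter J X))) sb) :
    sb = [(p::q::ib,x)] := by
  by_contra hne
  have hw1 : coeffW (monoW [(p::q::ib,x)] - monoW [(q::p::ib,x)] -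
      g.sum (fun r c => c • monoW [(r::ib,x)]) : MonoidAlgebra k (FreeMonoid (Letter J X)))
      [(p::q::ib,x)] ≠ 0 := by rw [coeff_s_w1 p q hpq ib x g]; exact one_ne_zero
  have hlt := h.2 _ hw1 (Ne.symm hne)
  rcases coeff_s_support h.1 with h' | h' | ⟨r, h'⟩
  · exact hne h'
  · exact not_lt_w2_w1 hpq ib x (h' ▸ hlt)
  · exact not_lt_wr_w1 r p q ib x (h' ▸ hlt)

lemma unsorted_decomp (l : List J) (h : ¬ l.Pairwise (· ≤ ·)) :
    ∃ jb p q ib, q < p ∧ List.Pairwise (· ≤ ·) ib ∧ l = jb ++ p :: q :: ib := by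
  induction l with
  | nil => exact absurd List.Pairwise.nil h
  | cons a t ih =>
    by_cases ht : t.Pairwise (· ≤ ·)
    · match t, ht with
      | [], _ => exact absurd (List.pairwise_singleton _ a) h
      | b :: t', ht =>
        have hab : ¬ a ≤ b := by
          intro hab
          exact h (List.pairwise_cons.mpr ⟨fun c hc => by
            rcases List.mem_cons.mp hc with rfl | hc
            · exact hab
            · exact hab.trans ((List.pairwise_cons.mp ht).1 c hc), ht⟩)
        exact ⟨[], a, b, t', lt_of_not_ge hab, (List.pairwise_cons.mp ht).2, rfl⟩
    · obtain ⟨jb, p, q, ib, h1, h2, h3⟩ := ih ht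
      exact ⟨a :: jb, p, q, ib, h1, h2, by simp [h3]⟩

lemma sorted_no_descent {l : List J} (hs : l.Pairwise (· ≤ ·)) {c : List J} {p q : J} {ib : List J}
    (h : l = c ++ p :: q :: ib) : p ≤ q := by
  subst h
  have hsub : List.Sublist [p, q] (c ++ p :: q :: ib) := by
    refine List.Sublist.trans ?_ (List.sublist_append_right c _)
    exact ((List.nil_sublist ib).cons₂ q).cons₂ p
  have := hs.sublist hsub
  exact (List.pairwise_cons.mp this).1 q (by simp)

end Main

/-- `Irr(S₀) = H^*`: the irreducible monomials are exactly the words all of whose letters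
have non-decreasing operator indices. -/
theorem stmt17 [LinearOrder J] [LinearOrder X] [Nontrivial k]
    (α : J → J → (J →₀ k)) :
    Irr (SLie0 (X := X) α) =
      {u : List (Letter J X) | ∀ p ∈ u, List.Pairwise (· ≤ ·) p.1} := by
  ext u
  simp only [Irr, Set.mem_setOf_eq]
  constructor
  · intro hu lp hlp
    by_contra hns
    apply hu
    obtain ⟨a, b, hab⟩ := List.append_of_mem hlp
    obtain ⟨jb, p, q, ib, hqp, hib, hl⟩ := unsorted_decomp lp.1 hns
    refine ⟨a, b, jb, _, ⟨p, q, ib, lp.2, hqp, hib, rfl⟩, [(p::q::ib, lp.2)], ?_, ?_⟩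
    · rw [sform]; exact isLT_s p q hqp ib lp.2 (α p q)
    · rw [hab]; simp [dHat, ← hl]
  · rintro hu ⟨a, b, ib', s, ⟨p, q, ib, x, hqp, hib, rfl⟩, sb, hlt, hu'⟩
    rw [sform] at hlt
    have hsb := isLT_s_unique hqp hlt
    subst hsb
    have hmem : ((ib' ++ p :: q :: ib, x) : Letter J X) ∈ u := by
      rw [hu']; simp [dHat]
    have hs := hu _ hmem
    exact absurd (sorted_no_descent hs rfl) (not_le.mpr hqp)
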